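/- The parallel beta relation of the suspension calculus has the diamond property: if t rewrites to u and t rewrites to v by the parallel β_s relation, then there exists s such that u and v each rewrite to s by one parallel β_s step. -/
import Mathlib


/- Terms of the suspension calculus: constants, de Bruijn indices `#i`,
applications, abstractions, and suspensions `[t, ol, nl, e]`. -/
mutual
inductive Tm : Type where
  | const : Nat → Tm
  | idx : Nat → Tm
  | app : Tm → Tm → Tm
  | lam : Tm → Tm
  | susp : Tm → Nat → Nat → Env → Tm
/-- Environments: `nil`, cons cells `(t,n)::e`, and merges `{e1, nl1, ol2, e2}`. -/
inductive Env : Type where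
  | nil : Env
  | econs : Tm → Nat → Env → Env
  | merge : Env → Nat → Nat → Env → Env
end

/-- Length of an environment. -/
def Env.len : Env → Nat
  | .nil => 0
  | .econs _ _ e => 1 + Env.len e
  | .merge e1 nl1 _ e2 => Env.len e1 + (Env.len e2 - nl1)

/-- Level of an environment. -/
def Env.lev : Env → Nat
  | .nil => 0
  | .econs _ l _ => l
  | .merge _ nl1 ol2 e2 => Env.lev e2 + (nl1 - ol2)

/- Well-formedness of suspension expressions. -/
mutual
inductive WfTm : Tm → Prop where
  | const : ∀ c, WfTm (.const c)
  | idx : ∀ i, 1 ≤ i → WfTm (.idx i)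
  | app : ∀ {t1 t2}, WfTm t1 → WfTm t2 → WfTm (.app t1 t2)
  | lam : ∀ {t}, WfTm t → WfTm (.lam t)
  | susp : ∀ {t e} (ol nl : Nat), WfTm t → WfEnv e → Env.len e = ol →
      Env.lev e ≤ nl → WfTm (.susp t ol nl e)
inductive WfEnv : Env → Prop where
  | nil : WfEnv .nil
  | econs : ∀ {t e} (l : Nat), WfTm t → WfEnv e → Env.lev e ≤ l → WfEnv (.econs t l e)
  | merge : ∀ {e1 e2} (nl1 ol2 : Nat), WfEnv e1 → WfEnv e2 → Env.lev e1 ≤ nl1 →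
      Env.len e2 = ol2 → WfEnv (.merge e1 nl1 ol2 e2)
end

/- One-step rewriting by the reading rules (r1)-(r6) and merging rules
(m1)-(m6), applied at any subexpression. -/
mutual
inductive SR : Tm → Tm → Prop where
  | r1 : ∀ c ol nl e, SR (.susp (.const c) ol nl e) (.const c)
  | r2 : ∀ i nl, 1 ≤ i → SR (.susp (.idx i) 0 nl .nil) (.idx (i + nl))
  | r3 : ∀ ol nl t l e, SR (.susp (.idx 1) ol nl (.econs t l e)) (.susp t 0 (nl - l) .nil)
  | r4 : ∀ i ol nl t l e, 1 < i →
      SR (.susp (.idx i) ol nl (.econs t l e)) (.susp (.idx (i - 1)) (ol - 1) nl e)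
  | r5 : ∀ t1 t2 ol nl e,
      SR (.susp (.app t1 t2) ol nl e) (.app (.susp t1 ol nl e) (.susp t2 ol nl e))
  | r6 : ∀ t ol nl e,
      SR (.susp (.lam t) ol nl e)
         (.lam (.susp t (ol + 1) (nl + 1) (.econs (.idx 1) (nl + 1) e)))
  | m1 : ∀ t ol1 nl1 e1 ol2 nl2 e2,
      SR (.susp (.susp t ol1 nl1 e1) ol2 nl2 e2)
         (.susp t (ol1 + (ol2 - nl1)) (nl2 + (nl1 - ol2)) (.merge e1 nl1 ol2 e2))
  | appL : ∀ {t1 t1'} (t2 : Tm), SR t1 t1' → SR (.app t1 t2) (.app t1' t2)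
  | appR : ∀ (t1 : Tm) {t2 t2'}, SR t2 t2' → SR (.app t1 t2) (.app t1 t2')
  | lamC : ∀ {t t'}, SR t t' → SR (.lam t) (.lam t')
  | suspT : ∀ {t t'} ol nl e, SR t t' → SR (.susp t ol nl e) (.susp t' ol nl e)
  | suspE : ∀ t ol nl {e e'}, SRE e e' → SR (.susp t ol nl e) (.susp t ol nl e')
inductive SRE : Env → Env → Prop where
  | m2 : ∀ e1 nl1, SRE (.merge e1 nl1 0 .nil) e1
  | m3 : ∀ ol2 e2, SRE (.merge .nil 0 ol2 e2) e2
  | m4 : ∀ nl1 ol2 t l e2, 1 ≤ nl1 →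
      SRE (.merge .nil nl1 ol2 (.econs t l e2)) (.merge .nil (nl1 - 1) (ol2 - 1) e2)
  | m5 : ∀ t n e1 nl1 ol2 s l e2, n < nl1 →
      SRE (.merge (.econs t n e1) nl1 ol2 (.econs s l e2))
          (.merge (.econs t n e1) (nl1 - 1) (ol2 - 1) e2)
  | m6 : ∀ t n e1 ol2 s l e2,
      SRE (.merge (.econs t n e1) n ol2 (.econs s l e2))
          (.econs (.susp t ol2 l (.econs s l e2)) (l + (n - ol2))
                  (.merge e1 n ol2 (.econs s l e2)))
  | consT : ∀ {t t'} l e, SR t t' → SRE (.econs t l e) (.econs t' l e)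
  | consE : ∀ t l {e e'}, SRE e e' → SRE (.econs t l e) (.econs t l e')
  | mergeL : ∀ {e1 e1'} nl1 ol2 e2, SRE e1 e1' →
      SRE (.merge e1 nl1 ol2 e2) (.merge e1' nl1 ol2 e2)
  | mergeR : ∀ e1 nl1 ol2 {e2 e2'}, SRE e2 e2' →
      SRE (.merge e1 nl1 ol2 e2) (.merge e1 nl1 ol2 e2')
end

/- The parallel β_s relation of the suspension calculus. -/
mutual
inductive ParT : Tm → Tm → Prop where
  | refl : ∀ t, ParT t t
  | app : ∀ {t1 t1' t2 t2'}, ParT t1 t1' → ParT t2 t2' →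
      ParT (.app t1 t2) (.app t1' t2')
  | lam : ∀ {t t'}, ParT t t' → ParT (.lam t) (.lam t')
  | susp : ∀ {t t' e e'} (ol nl : Nat), ParT t t' → ParE e e' →
      ParT (.susp t ol nl e) (.susp t' ol nl e')
  | beta : ∀ {t1 t1' t2 t2'}, ParT t1 t1' → ParT t2 t2' →
      ParT (.app (.lam t1) t2) (.susp t1' 1 0 (.econs t2' 0 .nil))
inductive ParE : Env → Env → Prop where
  | refl : ∀ e, ParE e e
  | econs : ∀ {t t' e e'} (l : Nat), ParT t t' → ParE e e' →
      ParE (.econs t l e) (.econs t' l e')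
  | merge : ∀ {e1 e1' e2 e2'} (nl1 ol2 : Nat), ParE e1 e1' → ParE e2 e2' →
      ParE (.merge e1 nl1 ol2 e2) (.merge e1' nl1 ol2 e2')
end

mutual
/-- Complete development of a term. -/
def devT : Tm → Tm
  | .const c => .const c
  | .idx i => .idx i
  | .app (.lam t1) t2 => .susp (devT t1) 1 0 (.econs (devT t2) 0 .nil)
  | .app (.const c) t2 => .app (.const c) (devT t2)
  | .app (.idx i) t2 => .app (.idx i) (devT t2)
  | .app (.app a b) t2 => .app (devT (.app a b)) (devT t2)
  | .app (.susp a ol nl e) t2 => .app (devT (.susp a ol nl e)) (devT t2)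
  | .lam t => .lam (devT t)
  | .susp t ol nl e => .susp (devT t) ol nl (devE e)
/-- Complete development of an environment. -/
def devE : Env → Env
  | .nil => .nil
  | .econs t l e => .econs (devT t) l (devE e)
  | .merge e1 nl1 ol2 e2 => .merge (devE e1) nl1 ol2 (devE e2)
end

mutual
theorem parDevT : ∀ t, ParT t (devT t)
  | .const _ => .refl _
  | .idx _ => .refl _
  | .app (.lam t1) t2 => .beta (parDevT t1) (parDevT t2)
  | .app (.const c) t2 => .app (.refl _) (parDevT t2)
  | .app (.idx i) t2 => .app (.refl _) (parDevT t2)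
  | .app (.app a b) t2 => .app (parDevT (.app a b)) (parDevT t2)
  | .app (.susp a ol nl e) t2 => .app (parDevT (.susp a ol nl e)) (parDevT t2)
  | .lam t => .lam (parDevT t)
  | .susp t ol nl e => .susp ol nl (parDevT t) (parDevE e)
theorem parDevE : ∀ e, ParE e (devE e)
  | .nil => .refl _
  | .econs t l e => .econs l (parDevT t) (parDevE e)
  | .merge e1 nl1 ol2 e2 => .merge nl1 ol2 (parDevE e1) (parDevE e2)
end

mutual
theorem triT : ∀ {t u : Tm}, ParT t u → ParT u (devT t)
  | t, _, .refl _ => parDevT t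
  | _, _, .lam h => .lam (triT h)
  | _, _, .susp ol nl h he => .susp ol nl (triT h) (triE he)
  | _, _, .beta h1 h2 => .susp 1 0 (triT h1) (.econs 0 (triT h2) (.refl _))
  | _, _, @ParT.app t1 t1' t2 t2' h1 h2 =>
    match t1, t1', h1 with
    | .lam a, _, .refl _ => .beta (parDevT a) (triT h2)
    | .lam a, _, .lam ha => .beta (triT ha) (triT h2)
    | .const c, _, h1 => .app (triT h1) (triT h2)
    | .idx i, _, h1 => .app (triT h1) (triT h2)
    | .app a b, _, h1 => .app (triT h1) (triT h2)
    | .susp a ol nl e, _, h1 => .app (triT h1) (triT h2)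
theorem triE : ∀ {e u : Env}, ParE e u → ParE u (devE e)
  | e, _, .refl _ => parDevE e
  | _, _, .econs l h he => .econs l (triT h) (triE he)
  | _, _, .merge nl1 ol2 h1 h2 => .merge nl1 ol2 (triE h1) (triE h2)
end

/-- the parallel β_s relation has the diamond property. -/
theorem parallel_beta_diamond :
    (∀ t u v : Tm, ParT t u → ParT t v → ∃ s, ParT u s ∧ ParT v s) ∧
    (∀ e u v : Env, ParE e u → ParE e v → ∃ s, ParE u s ∧ ParE v s) :=
  ⟨fun t _ _ hu hv => ⟨devT t, triT hu, triT hv⟩,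
   fun e _ _ hu hv => ⟨devE e, triE hu, triE hv⟩⟩
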